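/- arXiv:1709.03192 — 5 statements merged into one kernel-verified Lean document; each statement's English description precedes it below -/
import Mathlib

section
/- Let n ≥ 3, m = (n-2)/(n+2), and let u : (0,∞) → (0,∞) be a smooth positive radial function. Define w(s) = r² u(r)^{1-m} under the change of variables s = log r. If u (viewed as a radial function on ℝⁿ) satisfies ((n-1)/m) Δ(u^m) + β r u'(r) + (2β/(1-m)) u = 0, then w satisfies the ODE w'' = ((6-n)/4) (w')²/w + (n - 2 - (β/(n-1)) w') w for all s ∈ ℝ. -/
set_option maxHeartbeats 1000000 in
private lemma alg_stmt0 (nR m β E E2 U U1 U2 P P1 P2 Q1 Q2 : ℝ)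
    (hE : 0 < E) (hU : 0 < U) (hP : 0 < P)
    (hn : 3 ≤ nR) (hm : m = (nR-2)/(nR+2)) (hE2 : E2 = E*E)
    (hP1 : P1 = P/U) (hP2 : P2 = P/U/U) (hQ1 : Q1 = 1/P) (hQ2 : Q2 = 1/P/U)
    (hsolE : ((nR-1)/m) * ((U2*m*Q1 + (U1*m)*(U1*(m-1)*Q2)) + ((nR-1)/E)*(U1*m*Q1))
      + β*E*U1 + (2*β/(1-m))*U = 0) :
    (E2*2*2) * P + (E2*2) * (U1*E*(1-m)*P1)
      + ((E2*2) * (U1*E*(1-m)*P1)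
        + E2 * (((U2*E*E+U1*E)*(1-m)) * P1 + (U1*E*(1-m)) * (U1*E*(1-m-1)*P2)))
    = ((6-nR)/4) * ((E2*2)*P + E2*(U1*E*(1-m)*P1))^2 / (E2*P)
      + ((nR-2) - (β/(nR-1)) * ((E2*2)*P + E2*(U1*E*(1-m)*P1))) * (E2*P) := by
  have h2 : (0:ℝ) < nR + 2 := by linarith
  have h1 : (0:ℝ) < nR - 1 := by linarith
  have h2' : (nR:ℝ) + 2 ≠ 0 := h2.ne'
  have h1' : (nR:ℝ) - 1 ≠ 0 := h1.ne'
  have hE' : E ≠ 0 := hE.ne'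
  have hU' : U ≠ 0 := hU.ne'
  have hP' : P ≠ 0 := hP.ne'
  have hn2' : (nR:ℝ) - 2 ≠ 0 := by intro h; linarith [h]
  subst hE2 hP1 hP2 hQ1 hQ2
  subst hm
  rw [show (1 : ℝ) - (nR-2)/(nR+2) = 4/(nR+2) by field_simp; ring] at hsolE ⊢
  rw [show (nR-2)/(nR+2) - 1 = -4/(nR+2) by field_simp; ring] at hsolE
  rw [show (nR-1) / ((nR-2)/(nR+2)) = (nR-1)*(nR+2)/(nR-2) by rw [div_div_eq_mul_div]] at hsolE
  linear_combination (norm := (field_simp; ring))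
    (E*E*E*E*(4/(nR+2))*P^2/((nR-1)*U)) * hsolE

/-- The cylindrical change of variables for the radial steady
Yamabe soliton equation. -/
theorem stmt_0 (n : ℕ) (hn : 3 ≤ n) (β : ℝ) (hβ : 0 < β)
    (m : ℝ) (hm : m = ((n : ℝ) - 2) / ((n : ℝ) + 2))
    (u : ℝ → ℝ) (hu : ContDiff ℝ (⊤ : ℕ∞) u) (hupos : ∀ r > (0:ℝ), 0 < u r)
    (hsol : ∀ r > (0:ℝ),
      (((n : ℝ) - 1) / m) *
        (deriv (deriv (fun ρ => u ρ ^ m)) r + (((n : ℝ) - 1) / r) * deriv (fun ρ => u ρ ^ m) r)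
      + β * r * deriv u r + (2 * β / (1 - m)) * u r = 0)
    (w : ℝ → ℝ) (hw : ∀ s, w s = Real.exp (2 * s) * u (Real.exp s) ^ (1 - m)) :
    ∀ s : ℝ, deriv (deriv w) s =
      ((6 - (n : ℝ)) / 4) * (deriv w s) ^ 2 / w s
      + (((n : ℝ) - 2) - (β / ((n : ℝ) - 1)) * deriv w s) * w s := by
  have hn3 : (3:ℝ) ≤ (n:ℝ) := by exact_mod_cast hn
  have hud : Differentiable ℝ u := hu.differentiable (by simp)
  have hud2 : Differentiable ℝ (deriv u) :=
    (contDiff_infty_iff_deriv.mp (hu.of_le (by simp))).2.differentiable (by simp)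
  -- first derivative of w, everywhere
  have hwd : ∀ t : ℝ, HasDerivAt w
      (Real.exp (2*t) * 2 * u (Real.exp t) ^ (1-m)
        + Real.exp (2*t) * (deriv u (Real.exp t) * Real.exp t * (1-m) * u (Real.exp t) ^ (1-m-1)))
      t := by
    intro t
    have hfun : w = fun t => Real.exp (2*t) * u (Real.exp t) ^ (1-m) := funext hw
    rw [hfun]
    have hlin : HasDerivAt (fun x : ℝ => 2 * x) 2 t := by
      simpa using (hasDerivAt_id t).const_mul (2:ℝ)
    have h1 : HasDerivAt (fun t : ℝ => Real.exp (2*t)) (Real.exp (2*t) * 2) t :=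
      (Real.hasDerivAt_exp (2*t)).comp t hlin
    have hA : HasDerivAt (fun t : ℝ => u (Real.exp t)) (deriv u (Real.exp t) * Real.exp t) t :=
      ((hud (Real.exp t)).hasDerivAt).comp t (Real.hasDerivAt_exp t)
    have hAp : HasDerivAt (fun t : ℝ => u (Real.exp t) ^ (1-m))
        (deriv u (Real.exp t) * Real.exp t * (1-m) * u (Real.exp t) ^ (1-m-1)) t :=
      hA.rpow_const (Or.inl (hupos _ (Real.exp_pos t)).ne')
    exact h1.mul hAp
  intro s
  have hU0 : (0:ℝ) < u (Real.exp s) := hupos _ (Real.exp_pos s)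
  have hlin : HasDerivAt (fun x : ℝ => 2 * x) 2 s := by
    simpa using (hasDerivAt_id s).const_mul (2:ℝ)
  have h1 : HasDerivAt (fun t : ℝ => Real.exp (2*t)) (Real.exp (2*s) * 2) s :=
    (Real.hasDerivAt_exp (2*s)).comp s hlin
  have hA : HasDerivAt (fun t : ℝ => u (Real.exp t)) (deriv u (Real.exp s) * Real.exp s) s :=
    ((hud (Real.exp s)).hasDerivAt).comp s (Real.hasDerivAt_exp s)
  have hAp : HasDerivAt (fun t : ℝ => u (Real.exp t) ^ (1-m))
      (deriv u (Real.exp s) * Real.exp s * (1-m) * u (Real.exp s) ^ (1-m-1)) s :=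
    hA.rpow_const (Or.inl hU0.ne')
  have hAq : HasDerivAt (fun t : ℝ => u (Real.exp t) ^ (1-m-1))
      (deriv u (Real.exp s) * Real.exp s * (1-m-1) * u (Real.exp s) ^ (1-m-1-1)) s :=
    hA.rpow_const (Or.inl hU0.ne')
  have hBE : HasDerivAt (fun t : ℝ => deriv u (Real.exp t))
      (deriv (deriv u) (Real.exp s) * Real.exp s) s :=
    ((hud2 (Real.exp s)).hasDerivAt).comp s (Real.hasDerivAt_exp s)
  have hprod : HasDerivAt (fun t : ℝ => deriv u (Real.exp t) * Real.exp t)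
      (deriv (deriv u) (Real.exp s) * Real.exp s * Real.exp s + deriv u (Real.exp s) * Real.exp s)
      s := hBE.mul (Real.hasDerivAt_exp s)
  have hDW : HasDerivAt (deriv w)
      (Real.exp (2*s)*2*2 * u (Real.exp s) ^ (1-m)
        + Real.exp (2*s)*2 * (deriv u (Real.exp s) * Real.exp s * (1-m) * u (Real.exp s) ^ (1-m-1))
        + (Real.exp (2*s)*2 * (deriv u (Real.exp s) * Real.exp s * (1-m) * u (Real.exp s) ^ (1-m-1))
          + Real.exp (2*s) *
            ((deriv (deriv u) (Real.exp s) * Real.exp s * Real.exp s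
                + deriv u (Real.exp s) * Real.exp s) * (1-m) * u (Real.exp s) ^ (1-m-1)
              + (deriv u (Real.exp s) * Real.exp s * (1-m))
                * (deriv u (Real.exp s) * Real.exp s * (1-m-1) * u (Real.exp s) ^ (1-m-1-1)))))
      s := by
    have h := ((h1.mul_const (2:ℝ)).mul hAp).add (h1.mul ((hprod.mul_const (1-m)).mul hAq))
    exact h.congr_of_eventuallyEq (Filter.Eventually.of_forall fun t => (hwd t).deriv)
  -- soliton equation at exp s
  have hg1 : ∀ r : ℝ, 0 < r →
      HasDerivAt (fun ρ => u ρ ^ m) (deriv u r * m * u r ^ (m-1)) r :=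
    fun r hr => ((hud r).hasDerivAt).rpow_const (Or.inl (hupos r hr).ne')
  have hgderiv : deriv (fun ρ => u ρ ^ m) =ᶠ[nhds (Real.exp s)]
      fun r => deriv u r * m * u r ^ (m-1) := by
    filter_upwards [Ioi_mem_nhds (Real.exp_pos s)] with r hr
    exact (hg1 r hr).deriv
  have hC : HasDerivAt (fun r : ℝ => u r ^ (m-1))
      (deriv u (Real.exp s) * (m-1) * u (Real.exp s) ^ (m-1-1)) (Real.exp s) :=
    ((hud (Real.exp s)).hasDerivAt).rpow_const (Or.inl hU0.ne')
  have e2 : deriv (deriv (fun ρ => u ρ ^ m)) (Real.exp s)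
      = deriv (deriv u) (Real.exp s) * m * u (Real.exp s) ^ (m-1)
        + deriv u (Real.exp s) * m
          * (deriv u (Real.exp s) * (m-1) * u (Real.exp s) ^ (m-1-1)) := by
    rw [hgderiv.deriv_eq]
    exact ((((hud2 (Real.exp s)).hasDerivAt).mul_const m).mul hC).deriv
  have e1 : deriv (fun ρ => u ρ ^ m) (Real.exp s)
      = deriv u (Real.exp s) * m * u (Real.exp s) ^ (m-1) :=
    (hg1 _ (Real.exp_pos s)).deriv
  have hsolE := hsol (Real.exp s) (Real.exp_pos s)
  rw [e1, e2] at hsolE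
  -- power bookkeeping
  have hP : (0:ℝ) < u (Real.exp s) ^ (1-m) := Real.rpow_pos_of_pos hU0 _
  have hP1 : u (Real.exp s) ^ (1-m-1) = u (Real.exp s) ^ (1-m) / u (Real.exp s) := by
    rw [Real.rpow_sub hU0, Real.rpow_one]
  have hP2 : u (Real.exp s) ^ (1-m-1-1) = u (Real.exp s) ^ (1-m) / u (Real.exp s) / u (Real.exp s) := by
    rw [Real.rpow_sub hU0, Real.rpow_one, hP1]
  have hQ1 : u (Real.exp s) ^ (m-1) = 1 / u (Real.exp s) ^ (1-m) := by
    rw [show m - 1 = -(1-m) by ring, Real.rpow_neg hU0.le, one_div]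
  have hQ2 : u (Real.exp s) ^ (m-1-1) = 1 / u (Real.exp s) ^ (1-m) / u (Real.exp s) := by
    rw [Real.rpow_sub hU0, Real.rpow_one, hQ1]
  have hE2 : Real.exp (2*s) = Real.exp s * Real.exp s := by
    rw [show 2*s = s + s by ring, Real.exp_add]
  rw [hDW.deriv, (hwd s).deriv, hw s]
  exact alg_stmt0 ((n:ℝ)) m β (Real.exp s) (Real.exp (2*s)) (u (Real.exp s))
    (deriv u (Real.exp s)) (deriv (deriv u) (Real.exp s))
    (u (Real.exp s) ^ (1-m)) (u (Real.exp s) ^ (1-m-1)) (u (Real.exp s) ^ (1-m-1-1))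
    (u (Real.exp s) ^ (m-1)) (u (Real.exp s) ^ (m-1-1))
    (Real.exp_pos s) hU0 hP hn3 hm hE2 hP1 hP2 hQ1 hQ2 hsolE
end

section
/- Let n ≥ 6 and β > 0, and let w : ℝ → (0,∞) be a smooth positive solution of w'' = ((6-n)/4)(w')²/w + (n-2 - (β/(n-1)) w') w with w' > 0 everywhere and w''(s) > 0 in a neighborhood of -∞ (i.e., there exists s₁ with w'' > 0 on (-∞, s₁]). Then w''(s) > 0 for all s ∈ ℝ. -/
/-- For `n ≥ 6`, positivity of `w''` propagates from `-∞` to all of `ℝ`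
along the steady soliton ODE. -/
theorem stmt_1 (n : ℕ) (hn : 6 ≤ n) (β : ℝ) (hβ : 0 < β)
    (w : ℝ → ℝ) (hw : ContDiff ℝ (⊤ : ℕ∞) w)
    (hwpos : ∀ s, 0 < w s) (hwspos : ∀ s, 0 < deriv w s)
    (hode : ∀ s, deriv (deriv w) s =
      ((6 - (n : ℝ)) / 4) * (deriv w s) ^ 2 / w s
      + (((n : ℝ) - 2) - (β / ((n : ℝ) - 1)) * deriv w s) * w s)
    (hneg : ∃ s₁ : ℝ, ∀ s ≤ s₁, 0 < deriv (deriv w) s) :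
    ∀ s : ℝ, 0 < deriv (deriv w) s := by
  obtain ⟨s₁, hs₁⟩ := hneg
  -- basic constants
  have hn6 : (6 : ℝ) ≤ (n : ℝ) := by exact_mod_cast hn
  have hn1 : ((n : ℝ) - 1) ≠ 0 := by linarith
  set W1 : ℝ → ℝ := deriv w with hW1def
  set W2 : ℝ → ℝ := deriv W1 with hW2def
  -- differentiability facts
  have hw' : ContDiff ℝ (⊤ : ℕ∞) w := hw.of_le (by simp)
  have hwdiff : Differentiable ℝ w := hw'.differentiable (by norm_num)
  have hW1c : ContDiff ℝ (⊤ : ℕ∞) W1 := (contDiff_infty_iff_deriv.mp hw').2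
  have hW1diff : Differentiable ℝ W1 := hW1c.differentiable (by norm_num)
  have hW2c : ContDiff ℝ (⊤ : ℕ∞) W2 := (contDiff_infty_iff_deriv.mp hW1c).2
  have hW2diff : Differentiable ℝ W2 := hW2c.differentiable (by norm_num)
  have hdw : ∀ s, HasDerivAt w (W1 s) s := fun s => (hwdiff s).hasDerivAt
  have hdW1 : ∀ s, HasDerivAt W1 (W2 s) s := fun s => (hW1diff s).hasDerivAt
  have hdW2 : ∀ s, HasDerivAt W2 (deriv W2 s) s := fun s => (hW2diff s).hasDerivAt
  have hwne : ∀ s, w s ≠ 0 := fun s => (hwpos s).ne'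
  -- the coefficient functions
  set g : ℝ → ℝ := fun s => ((8 - (n : ℝ)) / 2) * (W1 s / w s) - β * w s / ((n : ℝ) - 1)
    with hgdef
  set h : ℝ → ℝ := fun s => (((n : ℝ) - 6) / 2) * (W1 s) ^ 3 / (w s) ^ 2 with hhdef
  -- the derivative of W2
  have hW2eq : W2 = fun s => ((6 - (n : ℝ)) / 4) * (W1 s) ^ 2 / w s
      + (((n : ℝ) - 2) - (β / ((n : ℝ) - 1)) * W1 s) * w s := funext fun s => hode s
  have hkey : ∀ s, HasDerivAt W2 (g s * W2 s + h s) s := by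
    intro s
    have h1 : HasDerivAt (fun t => ((6 - (n : ℝ)) / 4) * (W1 t) ^ 2 / w t
        + (((n : ℝ) - 2) - (β / ((n : ℝ) - 1)) * W1 t) * w t)
        ((((6 - (n : ℝ)) / 4) * (2 * W1 s * W2 s) * w s
            - ((6 - (n : ℝ)) / 4) * (W1 s) ^ 2 * W1 s) / (w s) ^ 2
          + ((0 - (β / ((n : ℝ) - 1)) * W2 s) * w s
            + (((n : ℝ) - 2) - (β / ((n : ℝ) - 1)) * W1 s) * W1 s)) s := by
      have hA : HasDerivAt (fun t => ((6 - (n : ℝ)) / 4) * (W1 t) ^ 2)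
          (((6 - (n : ℝ)) / 4) * (2 * W1 s * W2 s)) s := by
        have := ((hdW1 s).pow 2).const_mul ((6 - (n : ℝ)) / 4)
        simpa [mul_comm, mul_assoc, mul_left_comm] using this
      have hB := hA.div (hdw s) (hwne s)
      have hC : HasDerivAt (fun t => ((n : ℝ) - 2) - (β / ((n : ℝ) - 1)) * W1 t)
          (0 - (β / ((n : ℝ) - 1)) * W2 s) s :=
        (hasDerivAt_const s _).sub ((hdW1 s).const_mul _)
      exact hB.add (hC.mul (hdw s))
    have h2 : HasDerivAt W2
        ((((6 - (n : ℝ)) / 4) * (2 * W1 s * W2 s) * w s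
            - ((6 - (n : ℝ)) / 4) * (W1 s) ^ 2 * W1 s) / (w s) ^ 2
          + ((0 - (β / ((n : ℝ) - 1)) * W2 s) * w s
            + (((n : ℝ) - 2) - (β / ((n : ℝ) - 1)) * W1 s) * W1 s)) s := by
      have h2' := h1
      rw [← hW2eq] at h2'
      exact h2'
    convert h2 using 1
    have hode' : (((n : ℝ) - 2) - (β / ((n : ℝ) - 1)) * W1 s) * w s
        = W2 s - ((6 - (n : ℝ)) / 4) * (W1 s) ^ 2 / w s := by
      rw [hode s]; ring
    have h0 : w s ≠ 0 := hwne s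
    have hsub : (((n : ℝ) - 2) - (β / ((n : ℝ) - 1)) * W1 s)
        = (W2 s - ((6 - (n : ℝ)) / 4) * (W1 s) ^ 2 / w s) / w s := by
      rw [← hode', mul_div_cancel_right₀ _ h0]
    rw [hgdef, hhdef, hsub]
    field_simp
    ring
  -- antiderivative of g
  have hgcont : Continuous g := by
    apply Continuous.sub
    · exact continuous_const.mul ((hW1c.continuous.div hw'.continuous) hwne)
    · exact (continuous_const.mul hw'.continuous).div_const _
  set G : ℝ → ℝ := fun u => ∫ x in s₁..u, g x with hGdef
  have hdG : ∀ s, HasDerivAt G (g s) s := fun s =>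
    (hgcont.integral_hasStrictDerivAt s₁ s).hasDerivAt
  -- the monotone auxiliary function
  set F : ℝ → ℝ := fun s => W2 s * Real.exp (-G s) with hFdef
  have hdF : ∀ s, HasDerivAt F (h s * Real.exp (-G s)) s := by
    intro s
    have hE : HasDerivAt (fun t => Real.exp (-G t)) (Real.exp (-G s) * (-g s)) s := by
      have := (Real.hasDerivAt_exp (-G s)).comp s (hdG s).neg
      exact this
    have := (hkey s).mul hE
    refine this.congr_deriv ?_
    ring
  have hFdiff : Differentiable ℝ F := fun s => (hdF s).differentiableAt
  have hFmono : Monotone F := by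
    apply monotone_of_deriv_nonneg hFdiff
    intro s
    rw [(hdF s).deriv]
    have hh : 0 ≤ h s := by
      rw [hhdef]
      have hws := (hwspos s)
      have h6 : (0:ℝ) ≤ ((n : ℝ) - 6) / 2 := by linarith
      exact div_nonneg (mul_nonneg h6 (by positivity)) (by positivity)
    positivity
  intro s
  rcases le_or_gt s s₁ with hle | hlt
  · exact hs₁ s hle
  · have h1 : F s₁ ≤ F s := hFmono hlt.le
    have h2 : 0 < F s₁ := by
      rw [hFdef]
      exact mul_pos (hs₁ s₁ le_rfl) (Real.exp_pos _)
    have h3 : 0 < W2 s * Real.exp (-G s) := lt_of_lt_of_le h2 h1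
    have := Real.exp_pos (-G s)
    nlinarith
end

section
/- Let n = 6 and β > 0, and let w : ℝ → (0,∞) be smooth with w' > 0, satisfying w'' = (4 - (β/5) w') w (the n = 6 case of the steady soliton ODE), and suppose w'(s) → 0 as s → -∞. Then for all s ∈ ℝ, w'(s) = (20/β)(1 - exp(-(β/5) ∫_{-∞}^{s} w(l) dl)); in particular 0 < w'(s) < 20/β and w''(s) > 0 for all s. -/
open MeasureTheory ContDiff

/-- The `n = 6` case of the steady soliton ODE integrates explicitly:
`w'(s) = (20/β)(1 - exp(-(β/5)∫_{-∞}^s w))`, so `0 < w' < 20/β` and `w'' > 0`. -/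
theorem stmt_3 (β : ℝ) (hβ : 0 < β)
    (w : ℝ → ℝ) (hw : ContDiff ℝ (⊤ : ℕ∞) w)
    (hwpos : ∀ s, 0 < w s) (hwspos : ∀ s, 0 < deriv w s)
    (hode : ∀ s, deriv (deriv w) s = (4 - (β / 5) * deriv w s) * w s)
    (hlim : Filter.Tendsto (deriv w) Filter.atBot (nhds 0))
    (hint : ∀ s : ℝ, IntegrableOn w (Set.Iic s)) :
    ∀ s : ℝ,
      deriv w s = (20 / β) * (1 - Real.exp (-(β / 5) * ∫ l in Set.Iic s, w l))
      ∧ 0 < deriv w s ∧ deriv w s < 20 / β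
      ∧ 0 < deriv (deriv w) s := by
  have hwc : Continuous w := hw.continuous
  have hw' : ContDiff ℝ ∞ w := hw.of_le (by simp)
  have hdwdiff : Differentiable ℝ (deriv w) :=
    ((contDiff_infty_iff_deriv.mp hw').2).differentiable (by simp)
  set I : ℝ → ℝ := fun s => ∫ l in Set.Iic s, w l with hI
  -- derivative of I
  have hIderiv : ∀ s, HasDerivAt I (w s) s := by
    intro s
    have heq : ∀ t : ℝ, I t = I (s - 1) + ∫ x in (s - 1)..t, w x := by
      intro t
      have := intervalIntegral.integral_Iic_sub_Iic (hint (s - 1)) (hint t)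
      simp only [hI]
      linarith [this]
    have hd : HasDerivAt (fun t => I (s - 1) + ∫ x in (s - 1)..t, w x) (w s) s := by
      have h1 : IntervalIntegrable w volume (s - 1) s :=
        (hwc.intervalIntegrable _ _)
      exact ((intervalIntegral.integral_hasDerivAt_right h1
        hwc.aestronglyMeasurable.stronglyMeasurableAtFilter hwc.continuousAt).const_add _)
    exact hd.congr_deriv rfl |>.congr_of_eventuallyEq (Filter.Eventually.of_forall fun t => (heq t))
  have hIdiff : Differentiable ℝ I := fun s => (hIderiv s).differentiableAt
  -- limit of I at -∞ is 0
  have hIlim : Filter.Tendsto I Filter.atBot (nhds 0) := by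
    have key : Filter.Tendsto (fun s => ∫ l in Set.Iic (0:ℝ), Set.indicator (Set.Iic s) w l)
        Filter.atBot (nhds 0) := by
      have := MeasureTheory.tendsto_integral_filter_of_dominated_convergence
        (μ := volume.restrict (Set.Iic (0:ℝ))) (F := fun s l => Set.indicator (Set.Iic s) w l)
        (f := fun _ => (0:ℝ)) (bound := fun l => |w l|)
        (Filter.Eventually.of_forall fun s =>
          (hwc.aestronglyMeasurable.indicator measurableSet_Iic))
        (Filter.Eventually.of_forall fun s => Filter.Eventually.of_forall fun l => by
          by_cases h : l ≤ s <;> simp [Set.indicator_apply, h, abs_nonneg])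
        ((hint 0).abs)
        (Filter.Eventually.of_forall fun l => by
          have hev : ∀ᶠ s in Filter.atBot, Set.indicator (Set.Iic s) w l = 0 := by
            filter_upwards [Filter.eventually_lt_atBot l] with s hs
            simp [Set.indicator_apply, not_le.mpr hs]
          exact Filter.Tendsto.congr' (hev.mono fun s hs => hs.symm) tendsto_const_nhds)
      simpa using this
    have heq : ∀ᶠ s in Filter.atBot, (∫ l in Set.Iic (0:ℝ), Set.indicator (Set.Iic s) w l) = I s := by
      filter_upwards [Filter.eventually_le_atBot (0:ℝ)] with s hs
      rw [MeasureTheory.setIntegral_indicator measurableSet_Iic]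
      have : Set.Iic (0:ℝ) ∩ Set.Iic s = Set.Iic s := by
        ext x; simp only [Set.mem_inter_iff, Set.mem_Iic, and_iff_right_iff_imp]
        intro hx; linarith
      rw [this]
    exact key.congr' heq
  -- the conserved quantity
  set h : ℝ → ℝ := fun s => Real.exp ((β / 5) * I s) * (deriv w s - 20 / β) with hh
  have hhderiv : ∀ s, HasDerivAt h 0 s := by
    intro s
    have h1 : HasDerivAt (fun s => Real.exp ((β / 5) * I s))
        (Real.exp ((β / 5) * I s) * ((β / 5) * w s)) s :=
      (((hIderiv s).const_mul (β / 5)).exp)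
    have h2 : HasDerivAt (fun s => deriv w s - 20 / β) (deriv (deriv w) s) s :=
      ((hdwdiff s).hasDerivAt.sub_const _)
    have := h1.mul h2
    refine this.congr_deriv ?_
    rw [hode s]
    field_simp
    ring
  have hconst : ∀ s t : ℝ, h s = h t :=
    is_const_of_deriv_eq_zero (fun s => (hhderiv s).differentiableAt)
      (fun s => (hhderiv s).deriv)
  -- value of the constant
  have hhlim : Filter.Tendsto h Filter.atBot (nhds (-(20 / β))) := by
    have : Filter.Tendsto h Filter.atBot
        (nhds (Real.exp ((β / 5) * 0) * (0 - 20 / β))) :=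
      ((hIlim.const_mul (β / 5)).rexp.mul (hlim.sub_const _))
    simpa using this
  have hval : ∀ s, h s = -(20 / β) := by
    intro s
    have : Filter.Tendsto h Filter.atBot (nhds (h s)) := by
      have : h = fun _ => h s := funext fun t => hconst t s
      rw [this]; exact tendsto_const_nhds
    exact tendsto_nhds_unique this hhlim
  intro s
  have hexp : Real.exp ((β / 5) * I s) ≠ 0 := (Real.exp_pos _).ne'
  have hform : deriv w s = (20 / β) * (1 - Real.exp (-(β / 5) * I s)) := by
    have := hval s
    simp only [hh] at this
    have hrw : Real.exp (-(β / 5) * I s) = (Real.exp ((β / 5) * I s))⁻¹ := by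
      rw [← Real.exp_neg]; ring_nf
    rw [hrw]
    field_simp at this ⊢
    nlinarith [this, Real.exp_pos ((β / 5) * I s)]
  have hlt : deriv w s < 20 / β := by
    rw [hform]
    have he : 0 < Real.exp (-(β / 5) * I s) := Real.exp_pos _
    have h20 : 0 < 20 / β := by positivity
    nlinarith
  refine ⟨hform, hwspos s, hlt, ?_⟩
  rw [hode s]
  have h1 : (β / 5) * deriv w s < 4 := by
    have h2 : deriv w s * β < 20 := (lt_div_iff₀ hβ).mp hlt
    linarith
  have := hwpos s
  nlinarith
end

section
/- For m ∈ (0,1) and h > 0, with f(r) = (r²/(r² - h²))^{1/(1-m)}: there exists a constant C = C(m) > 0, independent of h, such that for all h > 1 and all r > h, each of |f - f^m|, |r² f^{m-2}(f')²|, |r² f^{m-1} f''|, and |r f^{m-1} f'| is bounded above by -C r f'(r). -/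
/-!
Write `p = 1/(1-m)` and `f = g^p` with `g = r²/(r²-h²)`. Logarithmic differentiation gives the
first-order equation `r (r² - h²) f' = -2 p h² f`, and `p (m - 1) = -1` gives `f^(m-1) = 1/g`.
Hence each correction term is the drift `q = -r f' = 2 p h² f/(r² - h²) ≥ 0` times a polynomial
in `t = h²/r² ∈ [0, 1]`, and these polynomials are bounded by `2p + 2` for `p ≥ 1`.
-/

open Filter Topology

lemma abs_le_mul_of_eq_mul {x q c C : ℝ} (hx : x = q * c) (hq : 0 ≤ q) (hc : |c| ≤ C) :
    |x| ≤ C * q := by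
  rw [hx, abs_mul, abs_of_nonneg hq, mul_comm]
  exact mul_le_mul_of_nonneg_right hc hq

noncomputable def barrier (p h r : ℝ) : ℝ := (r ^ 2 / (r ^ 2 - h ^ 2)) ^ p

section barrier

variable {p h r : ℝ}

lemma hasDerivAt_sq_div_sq_sub_sq (hr : r ^ 2 - h ^ 2 ≠ 0) :
    HasDerivAt (fun s => s ^ 2 / (s ^ 2 - h ^ 2)) (-2 * r * h ^ 2 / (r ^ 2 - h ^ 2) ^ 2) r := by
  have hsq : HasDerivAt (fun s : ℝ => s ^ 2) (2 * r) r := by simpa using hasDerivAt_pow 2 r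
  refine (hsq.div (hsq.sub_const (h ^ 2)) hr).congr_deriv ?_
  ring

lemma ne_zero_of_sq_lt_sq (hr : h ^ 2 < r ^ 2) : r ≠ 0 := by
  rintro rfl
  nlinarith [sq_nonneg h]

lemma barrier_pos (hr : h ^ 2 < r ^ 2) : 0 < barrier p h r :=
  Real.rpow_pos_of_pos (div_pos (by nlinarith [sq_nonneg h]) (sub_pos.2 hr)) p

lemma hasDerivAt_barrier (hr : h ^ 2 < r ^ 2) :
    HasDerivAt (barrier p h) (-2 * p * h ^ 2 * barrier p h r / (r * (r ^ 2 - h ^ 2))) r := by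
  have hd : r ^ 2 - h ^ 2 ≠ 0 := (sub_pos.2 hr).ne'
  have hr0 : r ≠ 0 := ne_zero_of_sq_lt_sq hr
  have hg : r ^ 2 / (r ^ 2 - h ^ 2) ≠ 0 := div_ne_zero (pow_ne_zero 2 hr0) hd
  refine ((hasDerivAt_sq_div_sq_sub_sq hd).rpow_const (p := p) (Or.inl hg)).congr_deriv ?_
  rw [barrier, Real.rpow_sub_one hg]
  field_simp

lemma deriv_barrier_eventuallyEq (hr : h ^ 2 < r ^ 2) :
    deriv (barrier p h) =ᶠ[𝓝 r] fun s => -2 * p * h ^ 2 * barrier p h s / (s * (s ^ 2 - h ^ 2)) := by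
  have hopen : IsOpen {s : ℝ | h ^ 2 < s ^ 2} := isOpen_lt continuous_const (continuous_pow 2)
  filter_upwards [hopen.mem_nhds hr] with s hs using (hasDerivAt_barrier hs).deriv

lemma hasDerivAt_deriv_barrier (hr : h ^ 2 < r ^ 2) :
    HasDerivAt (deriv (barrier p h))
      (2 * p * h ^ 2 * barrier p h r * (3 * r ^ 2 + (2 * p - 1) * h ^ 2) / (r * (r ^ 2 - h ^ 2)) ^ 2)
      r := by
  have hd : r ^ 2 - h ^ 2 ≠ 0 := (sub_pos.2 hr).ne'
  have hr0 : r ≠ 0 := ne_zero_of_sq_lt_sq hr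
  have hden : HasDerivAt (fun s : ℝ => s * (s ^ 2 - h ^ 2)) (3 * r ^ 2 - h ^ 2) r := by
    refine ((hasDerivAt_id' r).mul ((hasDerivAt_pow 2 r).sub_const (h ^ 2))).congr_deriv ?_
    push_cast
    ring
  refine HasDerivAt.congr_of_eventuallyEq ?_ (deriv_barrier_eventuallyEq hr)
  refine (((hasDerivAt_barrier hr).const_mul (-2 * p * h ^ 2)).div hden
    (mul_ne_zero hr0 hd)).congr_deriv ?_
  field_simp
  ring

lemma barrier_rpow_sub_one {m : ℝ} (hr : h ^ 2 < r ^ 2) (hpm : p * (m - 1) = -1) :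
    barrier p h r ^ (m - 1) = (r ^ 2 - h ^ 2) / r ^ 2 := by
  have hg : 0 ≤ r ^ 2 / (r ^ 2 - h ^ 2) := div_nonneg (sq_nonneg r) (sub_pos.2 hr).le
  rw [barrier, ← Real.rpow_mul hg, hpm, Real.rpow_neg_one, inv_div]

lemma barrier_corrections_le {m : ℝ} (hp : 1 ≤ p) (hpm : p * (m - 1) = -1) (hr : h ^ 2 < r ^ 2) :
    let f := barrier p h
    |f r - f r ^ m| ≤ -((2 * p + 2) * (r * deriv f r))
      ∧ |r ^ 2 * f r ^ (m - 2) * (deriv f r) ^ 2| ≤ -((2 * p + 2) * (r * deriv f r))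
      ∧ |r ^ 2 * f r ^ (m - 1) * deriv (deriv f) r| ≤ -((2 * p + 2) * (r * deriv f r))
      ∧ |r * f r ^ (m - 1) * deriv f r| ≤ -((2 * p + 2) * (r * deriv f r)) := by
  intro f
  have hF : 0 < f r := barrier_pos hr
  have hd : 0 < r ^ 2 - h ^ 2 := sub_pos.2 hr
  have hr0 : r ≠ 0 := ne_zero_of_sq_lt_sq hr
  have hpow_m : f r ^ m = f r ^ (m - 1) * f r := by
    rw [← Real.rpow_add_one hF.ne', sub_add_cancel]
  have hpow_m_sub_two : f r ^ (m - 2) = f r ^ (m - 1) / f r := by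
    rw [← Real.rpow_sub_one hF.ne']; ring_nf
  rw [hpow_m, hpow_m_sub_two, barrier_rpow_sub_one hr hpm, (hasDerivAt_barrier hr).deriv,
    (hasDerivAt_deriv_barrier hr).deriv]
  set F := f r
  set t := h ^ 2 / r ^ 2 with ht
  have ht0 : 0 ≤ t := by positivity
  have ht1 : t ≤ 1 := (div_le_one (by positivity)).2 (by linarith)
  set q := 2 * p * h ^ 2 * F / (r ^ 2 - h ^ 2) with hq
  have hq0 : 0 ≤ q := by positivity
  have hdrift : -((2 * p + 2) * (r * (-2 * p * h ^ 2 * F / (r * (r ^ 2 - h ^ 2)))))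
      = (2 * p + 2) * q := by
    rw [hq]; field_simp
  rw [hdrift]
  refine ⟨abs_le_mul_of_eq_mul (c := (1 - t) / (2 * p)) (by rw [hq, ht]; field_simp; ring) hq0 ?_,
    abs_le_mul_of_eq_mul (c := 2 * p * t) (by rw [hq, ht]; field_simp; ring) hq0 ?_,
    abs_le_mul_of_eq_mul (c := 3 + (2 * p - 1) * t) (by rw [hq, ht]; field_simp; ring) hq0 ?_,
    abs_le_mul_of_eq_mul (c := -(1 - t)) (by rw [hq, ht]; field_simp; ring) hq0 ?_⟩
  · rw [abs_of_nonneg (by positivity), div_le_iff₀ (by positivity)]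
    nlinarith
  all_goals exact abs_le.2 ⟨by nlinarith, by nlinarith⟩

end barrier

/-- The correction terms of the supersolution factor
`f_h(r) = (r²/(r²-h²))^{1/(1-m)}` are uniformly dominated by `-C r f_h'(r)`,
with `C = C(m)` independent of `h > 1`. -/
theorem stmt_13 (m : ℝ) (hm : m ∈ Set.Ioo (0:ℝ) 1)
    (f : ℝ → ℝ → ℝ)
    (hf : ∀ h r : ℝ, f h r = (r ^ 2 / (r ^ 2 - h ^ 2)) ^ (1 / (1 - m))) :
    ∃ C > (0:ℝ), ∀ h > (1:ℝ), ∀ r > h,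
      |f h r - f h r ^ m| ≤ -(C * (r * deriv (f h) r))
      ∧ |r ^ 2 * f h r ^ (m - 2) * (deriv (f h) r) ^ 2| ≤ -(C * (r * deriv (f h) r))
      ∧ |r ^ 2 * f h r ^ (m - 1) * deriv (deriv (f h)) r| ≤ -(C * (r * deriv (f h) r))
      ∧ |r * f h r ^ (m - 1) * deriv (f h) r| ≤ -(C * (r * deriv (f h) r)) := by
  obtain ⟨hm0, hm1⟩ := hm
  set p := 1 / (1 - m) with hp
  have hp1 : 1 ≤ p := by rw [hp, le_div_iff₀ (by linarith)]; linarith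
  have hpm : p * (m - 1) = -1 := by rw [hp]; field_simp; ring
  refine ⟨2 * p + 2, by linarith, fun h hh r hr => ?_⟩
  have hfh : f h = barrier p h := funext (hf h)
  rw [hfh]
  exact barrier_corrections_le hp1 hpm (by nlinarith)
end

section
/- Let n ≥ 3, m = (n-2)/(n+2), β > 0, λ > 0, and suppose u : (0,∞) → (0,∞) is smooth with lim_{r→∞} u(r)^{1-m} r²/ln r = (n-1)(n-2)/β and, with w(s) = e^{2s}u(e^s)^{1-m}, lim_{s→∞} w'(s) = (n-1)(n-2)/β. Then r u'(r) / u(r) → -2/(1-m) as r → ∞, and -((n-1)/m) Δ(u^m) = β(r u' + (2/(1-m))u) satisfies β(r u' + (2/(1-m))u) ~ (β/(1-m)) u/ln r as r → ∞. -/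
open Filter

/-- First-order asymptotics of the steady soliton:
`r u'/u → -2/(1-m)` and `β(ru' + (2/(1-m))u) ~ (β/(1-m)) u/ln r` as `r → ∞`. -/
theorem stmt_18 (n : ℕ) (hn : 3 ≤ n) (β lam : ℝ) (hβ : 0 < β) (hlam : 0 < lam)
    (m : ℝ) (hm : m = ((n : ℝ) - 2) / ((n : ℝ) + 2))
    (u : ℝ → ℝ) (hu : ContDiff ℝ (⊤ : ℕ∞) u) (hupos : ∀ r > (0:ℝ), 0 < u r)
    (hsol : ∀ r > (0:ℝ),
      (((n : ℝ) - 1) / m) *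
        (deriv (deriv (fun ρ => u ρ ^ m)) r + (((n : ℝ) - 1) / r) * deriv (fun ρ => u ρ ^ m) r)
      + β * r * deriv u r + (2 * β / (1 - m)) * u r = 0)
    (hfirst : Tendsto (fun r => (u r) ^ (1 - m) * r ^ 2 / Real.log r) atTop
      (nhds (((n : ℝ) - 1) * ((n : ℝ) - 2) / β)))
    (w : ℝ → ℝ) (hw : ∀ s, w s = Real.exp (2 * s) * u (Real.exp s) ^ (1 - m))
    (hws : Tendsto (deriv w) atTop (nhds (((n : ℝ) - 1) * ((n : ℝ) - 2) / β))) :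
    Tendsto (fun r => r * deriv u r / u r) atTop (nhds (-2 / (1 - m)))
    ∧ Tendsto (fun r =>
        (β * (r * deriv u r + (2 / (1 - m)) * u r)) /
          ((β / (1 - m)) * u r / Real.log r)) atTop (nhds 1) := by
  have hn' : (3:ℝ) ≤ (n:ℝ) := by exact_mod_cast hn
  have h1m : 0 < 1 - m := by
    rw [hm, sub_pos, div_lt_one (by linarith)]; linarith
  set L : ℝ := ((n : ℝ) - 1) * ((n : ℝ) - 2) / β with hLdef
  have hLpos : 0 < L := div_pos (mul_pos (by linarith) (by linarith)) hβ
  -- derivative formula for w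
  have hderivw : ∀ s : ℝ, deriv w s
      = w s * (2 + (1 - m) * (Real.exp s * deriv u (Real.exp s) / u (Real.exp s))) := by
    intro s
    have hwfun : w = fun s => Real.exp (2 * s) * u (Real.exp s) ^ (1 - m) := funext hw
    have hue : 0 < u (Real.exp s) := hupos _ (Real.exp_pos s)
    have h2s : HasDerivAt (fun s : ℝ => Real.exp (2 * s)) (2 * Real.exp (2 * s)) s := by
      have h0 : HasDerivAt (fun s : ℝ => 2 * s) 2 s := by
        simpa using (hasDerivAt_id s).const_mul (2:ℝ)
      simpa [mul_comm] using h0.exp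
    have hg : HasDerivAt (fun s => u (Real.exp s)) (deriv u (Real.exp s) * Real.exp s) s :=
      ((hu.differentiable (by simp) (Real.exp s)).hasDerivAt).comp s (Real.hasDerivAt_exp s)
    have hp : HasDerivAt (fun x : ℝ => x ^ (1 - m))
        ((1 - m) * u (Real.exp s) ^ (1 - m - 1)) (u (Real.exp s)) :=
      Real.hasDerivAt_rpow_const (Or.inl hue.ne')
    have hcomp : HasDerivAt (fun s => u (Real.exp s) ^ (1 - m))
        ((1 - m) * u (Real.exp s) ^ (1 - m - 1) * (deriv u (Real.exp s) * Real.exp s)) s :=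
      by have := hp.comp s hg; exact this
    have hmul : HasDerivAt (fun s => Real.exp (2 * s) * u (Real.exp s) ^ (1 - m)) _ s :=
      h2s.mul hcomp
    rw [hwfun, hmul.deriv]
    have hsub : u (Real.exp s) ^ (1 - m - 1)
        = u (Real.exp s) ^ (1 - m) / u (Real.exp s) := by
      rw [Real.rpow_sub hue, Real.rpow_one]
    rw [hsub]
    field_simp
  -- step B : w (log r) / log r → L
  have hB : Tendsto (fun r => w (Real.log r) / Real.log r) atTop (nhds L) := by
    apply hfirst.congr'
    filter_upwards [eventually_gt_atTop (1:ℝ)] with r hr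
    have hr0 : (0:ℝ) < r := by linarith
    rw [hw, two_mul, Real.exp_add, Real.exp_log hr0]
    rw [show r * r * u r ^ (1 - m) = u r ^ (1 - m) * r ^ 2 by ring]
  have hC : Tendsto (fun r => deriv w (Real.log r)) atTop (nhds L) :=
    hws.comp Real.tendsto_log_atTop
  have hA1 : Tendsto (fun r => deriv w (Real.log r) / (w (Real.log r) / Real.log r))
      atTop (nhds 1) := by
    have := hC.div hB hLpos.ne'
    rw [div_self hLpos.ne'] at this
    exact this
  have hA0 : Tendsto (fun r => deriv w (Real.log r) / w (Real.log r)) atTop (nhds 0) := by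
    have h := hA1.mul (tendsto_inv_atTop_zero.comp Real.tendsto_log_atTop)
    rw [mul_zero] at h
    apply h.congr'
    filter_upwards [eventually_gt_atTop (1:ℝ)] with r hr
    have hc : Real.log r ≠ 0 := (Real.log_pos hr).ne'
    show deriv w (Real.log r) / (w (Real.log r) / Real.log r) * (Real.log r)⁻¹
        = deriv w (Real.log r) / w (Real.log r)
    rw [div_div_eq_mul_div, div_mul_eq_mul_div, mul_inv_cancel_right₀ hc]
  constructor
  · have h := (hA0.sub (tendsto_const_nhds (x := (2:ℝ)))).div_const (1 - m)
    rw [show ((0:ℝ) - 2) / (1 - m) = -2 / (1 - m) by ring] at h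
    apply h.congr'
    filter_upwards [eventually_gt_atTop (1:ℝ)] with r hr
    have hr0 : (0:ℝ) < r := by linarith
    have hu0 : 0 < u r := hupos r hr0
    have hwpos : 0 < w (Real.log r) := by
      rw [hw]; exact mul_pos (Real.exp_pos _) (Real.rpow_pos_of_pos (hupos _ (Real.exp_pos _)) _)
    have hd := hderivw (Real.log r)
    rw [Real.exp_log hr0] at hd
    rw [hd]
    field_simp
    ring
  · apply hA1.congr'
    filter_upwards [eventually_gt_atTop (1:ℝ)] with r hr
    have hr0 : (0:ℝ) < r := by linarith
    have hu0 : 0 < u r := hupos r hr0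
    have hlog : 0 < Real.log r := Real.log_pos hr
    have hwpos : 0 < w (Real.log r) := by
      rw [hw]; exact mul_pos (Real.exp_pos _) (Real.rpow_pos_of_pos (hupos _ (Real.exp_pos _)) _)
    have hd := hderivw (Real.log r)
    rw [Real.exp_log hr0] at hd
    rw [hd]
    field_simp
    ring
end
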